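/- Let x = 0^{k_1} 1 0^{k_2} 1 0^{k_3} 1 ... be an infinite binary sequence with liminf_{n→∞} k_{n+1}/k_n > 1. Then liminf_{n→∞} Σ(x_1...x_n)/n³ > 0, while x is not eventually periodic. -/

import Mathlib

/-!
A run `0^m` inside `w` contains at least `m + 1 - j` occurrences of `0^j` for each
`1 ≤ j ≤ m`, so `Σ(w) ≥ ∑_{i ≤ m} i² ≥ m³/3`; on the other hand `Σ(w) ≤ |w|²(|w| + 1)` always.
Eventually `k_{n+1} ≥ r k_n` with `r > 1`, so the lengths of all earlier blocks add up to at
most a constant times the length of the last complete one. Hence every long prefix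
`x_1 ⋯ x_n` contains a run of zeros of length `≥ c n`: the last complete block or the
incomplete block at its end. This gives `Σ(x_1 ⋯ x_n) ≥ (c n)³/3`. Finally `k_n → ∞`, and a
run of zeros longer than a period `p` that ends with a `1` contradicts periodicity.
-/

open Filter

/-- Number of occurrences of `ξ` as a factor of `w` (occurrence at position `i`
means `ξ = w_{i+1}...w_{i+|ξ|}`). -/
def occ (w ξ : List Bool) : ℕ :=
  ((List.range w.length).filter (fun i => ξ.isPrefixOf (w.drop i))).length

/-- `ℓ`-fold concatenation `η^ℓ` of the word `η`. -/
def wpow (η : List Bool) (ℓ : ℕ) : List Bool := (List.replicate ℓ η).flatten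

/-- The Kamae–Xue complexity `Σ(w) = Σ_{ξ ∈ {0,1}^+} |w|_ξ²`.  Since only
factors of `w` contribute nonzero terms, the sum is taken over the (finite) set
of nonempty sublists of `w`, which contains all factors of `w`. -/
def kxSum (w : List Bool) : ℕ :=
  ∑ ξ ∈ w.sublists.toFinset.filter (fun ξ => ξ ≠ []), (occ w ξ) ^ 2

/-- `Λ(w) = max{|η|²(ℓ+1)³ : η nonempty, ℓ ≥ 1, η^ℓ a factor of w}`. -/
noncomputable def Lam (w : List Bool) : ℕ :=
  sSup {m | ∃ η ℓ, η ≠ ([] : List Bool) ∧ 1 ≤ ℓ ∧ wpow η ℓ <:+: w ∧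
    m = η.length ^ 2 * (ℓ + 1) ^ 3}

/-- A nonempty word is prime (primitive) if it is not a proper power. -/
def IsPrimeWord (η : List Bool) : Prop :=
  η ≠ [] ∧ ∀ ζ ℓ, 2 ≤ ℓ → η ≠ wpow ζ ℓ

/-- `|v|_{ξ,m}`: occurrences of `ξ` in `v` ending in the last `m` positions. -/
def occEnd (v ξ : List Bool) (m : ℕ) : ℕ :=
  ((List.range v.length).filter
    (fun i => ξ.isPrefixOf (v.drop i) && decide (v.length < i + ξ.length + m))).length

/-- The prefix `x_1 x_2 ⋯ x_n` of the infinite sequence `x`. -/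
def pref (x : ℕ → Bool) (n : ℕ) : List Bool := (List.range n).map x

open Finset

lemma occ_eq_card (w ξ : List Bool) :
    occ w ξ = #{i ∈ range w.length | ξ <+: w.drop i} := by
  simp only [occ, card_def, filter_val, range_val, Multiset.range, Multiset.filter_coe,
    Multiset.coe_card, ← List.isPrefixOf_iff_prefix, Bool.decide_eq_true]

lemma occ_le_length (w ξ : List Bool) : occ w ξ ≤ w.length :=
  (List.length_filter_le _ _).trans_eq List.length_range

lemma card_filter_prefix_le {α : Type*} [DecidableEq α] (F : Finset (List α)) (v : List α)
    {L : ℕ} (hF : ∀ ξ ∈ F, ξ.length ≤ L) : #{ξ ∈ F | ξ <+: v} ≤ L + 1 := by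
  calc #{ξ ∈ F | ξ <+: v} ≤ #((range (L + 1)).image (v.take ·)) := by
        refine card_le_card fun ξ hξ => ?_
        obtain ⟨hξF, hξv⟩ := mem_filter.mp hξ
        exact mem_image.mpr ⟨ξ.length, mem_range.mpr (Nat.lt_succ_of_le (hF ξ hξF)),
          (List.prefix_iff_eq_take.mp hξv).symm⟩
    _ ≤ L + 1 := card_image_le.trans_eq (card_range _)

lemma kxSum_le (w : List Bool) : kxSum w ≤ w.length ^ 2 * (w.length + 1) := by
  set F := w.sublists.toFinset.filter (· ≠ [])
  have hF : ∀ ξ ∈ F, ξ.length ≤ w.length := fun ξ hξ =>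
    (List.mem_sublists.mp (List.mem_toFinset.mp (mem_filter.mp hξ).1)).length_le
  have hsum : ∑ ξ ∈ F, occ w ξ ≤ w.length * (w.length + 1) :=
    calc ∑ ξ ∈ F, occ w ξ = ∑ i ∈ range w.length, #{ξ ∈ F | ξ <+: w.drop i} := by
          simp only [occ_eq_card, card_filter]; exact sum_comm
      _ ≤ ∑ i ∈ range w.length, (w.length + 1) :=
          sum_le_sum fun i _ => card_filter_prefix_le F _ hF
      _ = w.length * (w.length + 1) := by simp
  calc kxSum w = ∑ ξ ∈ F, occ w ξ * occ w ξ := by simp only [kxSum, sq]; rfl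
    _ ≤ ∑ ξ ∈ F, w.length * occ w ξ :=
        sum_le_sum fun ξ _ => Nat.mul_le_mul_right _ (occ_le_length w ξ)
    _ = w.length * ∑ ξ ∈ F, occ w ξ := (mul_sum _ _ _).symm
    _ ≤ w.length ^ 2 * (w.length + 1) := by
        rw [sq, mul_assoc]; exact Nat.mul_le_mul_left _ hsum

lemma le_occ_replicate {b : Bool} {m j : ℕ} {w : List Bool} (h : List.replicate m b <:+: w)
    (hj0 : 0 < j) (hj : j ≤ m) : m + 1 - j ≤ occ w (List.replicate j b) := by
  obtain ⟨s, t, rfl⟩ := h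
  have hprefix : ∀ d ≤ m - j,
      List.replicate j b <+: (s ++ List.replicate m b ++ t).drop (s.length + d) := by
    intro d hd
    have hsplit :
        List.replicate (m - d) b = List.replicate j b ++ List.replicate (m - d - j) b := by
      rw [← List.replicate_add]; congr 1; omega
    rw [List.append_assoc, List.drop_append, List.drop_eq_nil_of_le (by omega), List.nil_append,
      Nat.add_sub_cancel_left, List.drop_append_of_le_length (by rw [List.length_replicate]; omega),
      List.drop_replicate, hsplit, List.append_assoc]
    exact List.prefix_append _ _
  calc m + 1 - j = #(Icc s.length (s.length + (m - j))) := by rw [Nat.card_Icc]; omega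
    _ ≤ occ _ _ := by
      rw [occ_eq_card]
      refine card_le_card fun i hi => ?_
      obtain ⟨h1, h2⟩ := mem_Icc.mp hi
      obtain ⟨d, rfl⟩ := Nat.exists_eq_add_of_le h1
      have hlt : s.length + d < (s ++ List.replicate m b ++ t).length := by
        simp only [List.length_append, List.length_replicate]; omega
      exact mem_filter.mpr ⟨mem_range.mpr hlt, hprefix d (by omega)⟩

lemma cube_le_three_mul_sum_sq (m : ℕ) : m ^ 3 ≤ 3 * ∑ j ∈ range m, (j + 1) ^ 2 := by
  induction m with
  | zero => simp
  | succ m ih =>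
    have h3 : (m + 1) ^ 3 = m ^ 3 + 3 * m ^ 2 + 3 * m + 1 := by ring
    have h2 : (m + 1) ^ 2 = m ^ 2 + 2 * m + 1 := by ring
    rw [sum_range_succ]; linarith

lemma cube_le_three_mul_kxSum {b : Bool} {m : ℕ} {w : List Bool}
    (h : List.replicate m b <:+: w) : m ^ 3 ≤ 3 * kxSum w := by
  have hinj : Set.InjOn (fun j => List.replicate (m - j) b) (range m) := by
    intro i hi j hj hij
    have := congrArg List.length hij
    simp only [coe_range, Set.mem_Iio, List.length_replicate] at hi hj this
    omega
  have hsub : (range m).image (fun j => List.replicate (m - j) b)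
      ⊆ w.sublists.toFinset.filter (· ≠ []) := by
    intro ξ hξ
    obtain ⟨j, hj, rfl⟩ := mem_image.mp hξ
    have hj := mem_range.mp hj
    simp only [mem_filter, List.mem_toFinset, List.mem_sublists, ne_eq, List.replicate_eq_nil_iff]
    exact ⟨((List.replicate_sublist_replicate b).mpr (Nat.sub_le m j)).trans h.sublist,
      by omega⟩
  calc m ^ 3 ≤ 3 * ∑ j ∈ range m, (j + 1) ^ 2 := cube_le_three_mul_sum_sq m
    _ ≤ 3 * ∑ j ∈ range m, occ w (List.replicate (m - j) b) ^ 2 := by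
        gcongr with j hj
        have := mem_range.mp hj
        have := le_occ_replicate h (by omega) (Nat.sub_le m j)
        omega
    _ = 3 * ∑ ξ ∈ (range m).image (fun j => List.replicate (m - j) b), occ w ξ ^ 2 := by
        rw [sum_image hinj]
    _ ≤ 3 * kxSum w := Nat.mul_le_mul_left _ (sum_le_sum_of_subset hsub)

lemma length_pref (x : ℕ → Bool) (n : ℕ) : (pref x n).length = n := by simp [pref]

lemma replicate_isInfix_pref {x : ℕ → Bool} {b : Bool} {a m n : ℕ} (hn : a + m ≤ n)
    (hx : ∀ i, a ≤ i → i < a + m → x i = b) : List.replicate m b <:+: pref x n := by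
  have hrun : ((pref x n).drop a).take m = List.replicate m b :=
    List.ext_getElem
      (by simp only [List.length_take, List.length_drop, length_pref, List.length_replicate]; omega)
      fun i h _ => by
      simp only [List.length_take, List.length_drop, length_pref] at h
      simpa [pref] using hx (a + i) (by omega) (by omega)
  rw [← hrun]
  exact (List.take_prefix _ _).isInfix.trans (List.drop_suffix _ _).isInfix

lemma liminf_kxSum_pref_pos {x : ℕ → Bool} {b : Bool} {c : ℝ} (hc : 0 < c)
    (hrun : ∀ᶠ n : ℕ in atTop, ∃ m : ℕ, c * n ≤ m ∧ List.replicate m b <:+: pref x n) :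
    0 < atTop.liminf (fun n => (kxSum (pref x n) : ℝ) / (n : ℝ) ^ 3) := by
  have hbdd :
      IsBoundedUnder (· ≤ ·) atTop (fun n => (kxSum (pref x n) : ℝ) / (n : ℝ) ^ 3) := by
    refine ⟨2, eventually_map.mpr ?_⟩
    filter_upwards [eventually_ge_atTop 1] with n hn
    have hkx : (kxSum (pref x n) : ℝ) ≤ n ^ 2 * (n + 1) := by
      exact_mod_cast length_pref x n ▸ kxSum_le (pref x n)
    have hn1 : (1 : ℝ) ≤ n := by exact_mod_cast hn
    rw [div_le_iff₀ (by positivity)]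
    nlinarith
  have hlow : ∀ᶠ n in atTop, c ^ 3 / 3 ≤ (kxSum (pref x n) : ℝ) / (n : ℝ) ^ 3 := by
    filter_upwards [hrun, eventually_gt_atTop 0] with n ⟨m, hcm, hm⟩ hn
    have hkx : (m : ℝ) ^ 3 ≤ 3 * kxSum (pref x n) := by
      exact_mod_cast cube_le_three_mul_kxSum hm
    have hcm3 : (c * n) ^ 3 ≤ (m : ℝ) ^ 3 := pow_le_pow_left₀ (by positivity) hcm 3
    rw [le_div_iff₀ (by positivity)]
    linarith [mul_pow c (n : ℝ) 3]
  exact (by positivity : 0 < c ^ 3 / 3).trans_le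
    (le_liminf_of_le hbdd.isCoboundedUnder_ge hlow)

lemma exists_one_lt_eventually_mul_le {k : ℕ → ℕ}
    (hk : 1 < atTop.liminf (fun n => (k (n + 1) : ℝ) / (k n : ℝ))) :
    ∃ r : ℝ, 1 < r ∧ ∀ᶠ n in atTop, 0 < k n ∧ r * k n ≤ k (n + 1) := by
  obtain ⟨r, hr1, hr⟩ := exists_between hk
  have hbdd : IsBoundedUnder (· ≥ ·) atTop (fun n => (k (n + 1) : ℝ) / (k n : ℝ)) :=
    isBoundedUnder_of ⟨0, fun n => by positivity⟩
  refine ⟨r, hr1, (eventually_lt_of_lt_liminf hr hbdd).mono fun n hn => ?_⟩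
  have hkn : 0 < k n := Nat.pos_of_ne_zero fun h0 => by
    simp only [h0, Nat.cast_zero, div_zero] at hn; linarith
  exact ⟨hkn, ((lt_div_iff₀ (by positivity)).mp hn).le⟩

lemma tendsto_atTop_of_eventually_lt_succ {k : ℕ → ℕ} (h : ∀ᶠ n in atTop, k n < k (n + 1)) :
    Tendsto k atTop atTop := by
  obtain ⟨N, hN⟩ := eventually_atTop.mp h
  refine (tendsto_add_atTop_iff_nat N).mp (strictMono_nat_of_lt_succ fun j => ?_).tendsto_atTop
  simpa [Nat.add_right_comm] using hN (j + N) (by omega)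

lemma sum_Ico_le_of_mul_le {a : ℕ → ℝ} {r : ℝ} {N : ℕ} (hr : 1 < r) (ha : 0 ≤ a N)
    (hgrowth : ∀ i, N ≤ i → r * a i ≤ a (i + 1)) {t : ℕ} (ht : N ≤ t) :
    ∑ i ∈ Ico N (t + 1), a i ≤ r / (r - 1) * a t := by
  have hr' : 0 < r - 1 := by linarith
  induction t, ht using Nat.le_induction with
  | base =>
    rw [Nat.Ico_succ_singleton, sum_singleton]
    exact le_mul_of_one_le_left ha ((one_le_div hr').mpr (by linarith))
  | succ t ht ih =>
    rw [sum_Ico_succ_top (by omega)]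
    have hstep : r / (r - 1) * a t ≤ a (t + 1) / (r - 1) := by
      rw [div_mul_eq_mul_div]; exact div_le_div_of_nonneg_right (hgrowth t ht) hr'.le
    calc ∑ i ∈ Ico N (t + 1), a i + a (t + 1) ≤ a (t + 1) / (r - 1) + a (t + 1) := by linarith
      _ = r / (r - 1) * a (t + 1) := by field_simp; ring

/-- The block `0^{k t} 1` occupies the positions `[blockStart k t, blockStart k (t + 1))`. -/
def blockStart (k : ℕ → ℕ) (t : ℕ) : ℕ := ∑ i ∈ range t, (k i + 1)

section Blocks

variable {x : ℕ → Bool} {k : ℕ → ℕ} {r : ℝ} {N : ℕ}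

lemma blockStart_succ (k : ℕ → ℕ) (t : ℕ) :
    blockStart k (t + 1) = blockStart k t + (k t + 1) :=
  sum_range_succ _ _

lemma strictMono_blockStart (k : ℕ → ℕ) : StrictMono (blockStart k) :=
  strictMono_nat_of_lt_succ fun t => by rw [blockStart_succ]; omega

lemma exists_blockStart_le_lt (k : ℕ → ℕ) (n : ℕ) :
    ∃ t, blockStart k t ≤ n ∧ n < blockStart k (t + 1) := by
  have hex : ∃ t, n < blockStart k (t + 1) := ⟨n, (strictMono_blockStart k).le_apply.trans_lt'
    (Nat.lt_succ_self n)⟩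
  refine ⟨Nat.find hex, ?_, Nat.find_spec hex⟩
  rcases h : Nat.find hex with _ | t
  · simp [blockStart]
  · exact not_lt.mp (Nat.find_min hex (h ▸ Nat.lt_succ_self t))

lemma eq_false_of_mem_block (hx : ∀ m, x m = true ↔ ∃ n, m + 1 = blockStart k (n + 1))
    {t i : ℕ} (h1 : blockStart k t ≤ i) (h2 : i + 1 < blockStart k (t + 1)) : x i = false := by
  refine Bool.eq_false_iff.mpr fun hi => ?_
  obtain ⟨s, hs⟩ := (hx i).mp hi
  rcases lt_trichotomy s t with hst | rfl | hst
  · have := (strictMono_blockStart k).monotone (show s + 1 ≤ t by omega); omega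
  · omega
  · have := (strictMono_blockStart k).monotone (show t + 1 ≤ s + 1 by omega); omega

lemma eq_true_blockStart_add (hx : ∀ m, x m = true ↔ ∃ n, m + 1 = blockStart k (n + 1))
    (t : ℕ) : x (blockStart k t + k t) = true :=
  (hx _).mpr ⟨t, by rw [blockStart_succ]; omega⟩

lemma replicate_false_isInfix_pref (hx : ∀ m, x m = true ↔ ∃ n, m + 1 = blockStart k (n + 1))
    {t a m n : ℕ} (ha : blockStart k t ≤ a) (hm : a + m < blockStart k (t + 1))
    (hn : a + m ≤ n) : List.replicate m false <:+: pref x n :=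
  replicate_isInfix_pref hn fun _ hi hi' => eq_false_of_mem_block hx (ha.trans hi) (by omega)

lemma not_eventually_periodic (hx : ∀ m, x m = true ↔ ∃ n, m + 1 = blockStart k (n + 1))
    (hk : Tendsto k atTop atTop) : ¬ ∃ N p, 1 ≤ p ∧ ∀ n, N ≤ n → x (n + p) = x n := by
  rintro ⟨N, p, hp, hper⟩
  obtain ⟨t, hpt, hNt⟩ := ((hk.eventually_ge_atTop p).and (eventually_ge_atTop N)).exists
  have hNS : N ≤ blockStart k t := hNt.trans (strictMono_blockStart k).le_apply
  have hone := eq_true_blockStart_add hx t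
  have hzero : x (blockStart k t + k t - p) = false :=
    eq_false_of_mem_block hx (t := t) (by omega) (by rw [blockStart_succ]; omega)
  have := hper (blockStart k t + k t - p) (by omega)
  rw [Nat.sub_add_cancel (by omega), hone, hzero] at this
  exact Bool.true_eq_false ▸ this

lemma blockStart_succ_le (hr : 1 < r) (hgrowth : ∀ i, N ≤ i → 0 < k i ∧ r * k i ≤ k (i + 1))
    {s : ℕ} (hs : N ≤ s) :
    (blockStart k (s + 1) : ℝ) ≤ blockStart k N + 2 * (r / (r - 1)) * k s := by
  have hsplit : blockStart k N + ∑ i ∈ Ico N (s + 1), (k i + 1) = blockStart k (s + 1) :=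
    sum_range_add_sum_Ico _ (by omega)
  have hgeom := sum_Ico_le_of_mul_le (a := fun i => (k i : ℝ)) hr (Nat.cast_nonneg _)
    (fun i hi => (hgrowth i hi).2) hs
  calc (blockStart k (s + 1) : ℝ)
        = blockStart k N + ∑ i ∈ Ico N (s + 1), ((k i : ℝ) + 1) := by
        rw [← hsplit]; push_cast; rfl
    _ ≤ blockStart k N + ∑ i ∈ Ico N (s + 1), 2 * (k i : ℝ) := by
        gcongr with i hi
        have : (1 : ℝ) ≤ k i := by exact_mod_cast (hgrowth i (mem_Ico.mp hi).1).1
        linarith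
    _ ≤ blockStart k N + 2 * (r / (r - 1)) * k s := by rw [← mul_sum]; linarith

lemma exists_pos_eventually_zero_run_ge
    (hx : ∀ m, x m = true ↔ ∃ n, m + 1 = blockStart k (n + 1))
    (hr : 1 < r) (hgrowth : ∀ i, N ≤ i → 0 < k i ∧ r * k i ≤ k (i + 1)) :
    ∃ c : ℝ, 0 < c ∧
      ∀ᶠ n : ℕ in atTop, ∃ m : ℕ, c * n ≤ m ∧ List.replicate m false <:+: pref x n := by
  set ρ := r / (r - 1)
  have hρ : 0 < ρ := div_pos (by linarith) (by linarith)
  refine ⟨1 / (2 * (2 * ρ + 1)), by positivity, ?_⟩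
  filter_upwards [eventually_ge_atTop (blockStart k (N + 1)),
    eventually_ge_atTop (2 * blockStart k N)] with n hn1 hn2
  obtain ⟨t, hSt, hnt⟩ := exists_blockStart_le_lt k n
  have hNt : N + 1 < t + 1 := (strictMono_blockStart k).lt_iff_lt.mp (hn1.trans_lt hnt)
  obtain ⟨s, rfl⟩ : ∃ s, t = s + 1 := ⟨t - 1, by omega⟩
  have hblock : List.replicate (k s) false <:+: pref x n :=
    replicate_false_isInfix_pref hx (t := s) le_rfl (by rw [blockStart_succ]; omega)
      (by rw [blockStart_succ] at hSt; omega)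
  have htail : List.replicate (n - blockStart k (s + 1)) false <:+: pref x n :=
    replicate_false_isInfix_pref hx (t := s + 1) le_rfl (by omega) (by omega)
  refine ⟨max (k s) (n - blockStart k (s + 1)), ?_, ?_⟩
  · have hbound := blockStart_succ_le hr hgrowth (by omega : N ≤ s)
    have hkM : (k s : ℝ) ≤ max (k s) (n - blockStart k (s + 1)) := by
      exact_mod_cast le_max_left _ _
    have htM : (n : ℝ) - blockStart k (s + 1) ≤ max (k s) (n - blockStart k (s + 1)) := by
      rw [← Nat.cast_sub hSt]; exact_mod_cast le_max_right _ _
    have hn2' : (2 * blockStart k N : ℝ) ≤ n := by exact_mod_cast hn2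
    -- `n ≤ blockStart k N + 2ρ k s + (n - blockStart k (s + 1))` and `blockStart k N ≤ n / 2`
    rw [one_div, inv_mul_le_iff₀ (by positivity)]
    nlinarith [mul_le_mul_of_nonneg_left hkM hρ.le]
  · rcases max_choice (k s) (n - blockStart k (s + 1)) with h | h <;> rw [h] <;> assumption

end Blocks

/-- for `x = 0^{k_1} 1 0^{k_2} 1 ⋯` with
`liminf k_{n+1}/k_n > 1`, `liminf Σ(x_1...x_n)/n³ > 0` while `x` is not
eventually periodic.  (Here `k i` is `k_{i+1}`, and the `1`s of `x` sit exactly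
at the 0-indexed positions `k_1 + 1 + ⋯ + k_n + 1 − 1`.) -/
theorem sparse_ones_liminf_pos_not_periodic (x : ℕ → Bool) (k : ℕ → ℕ)
    (hx : ∀ m, x m = true ↔ ∃ n, m + 1 = ∑ i ∈ Finset.range (n + 1), (k i + 1))
    (hk : 1 < atTop.liminf (fun n => (k (n + 1) : ℝ) / (k n : ℝ))) :
    0 < atTop.liminf (fun n => (kxSum (pref x n) : ℝ) / (n : ℝ) ^ 3) ∧
      ¬ ∃ N p, 1 ≤ p ∧ ∀ n, N ≤ n → x (n + p) = x n := by
  obtain ⟨r, hr, hgrowth⟩ := exists_one_lt_eventually_mul_le hk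
  have hincreasing : ∀ᶠ n in atTop, k n < k (n + 1) := hgrowth.mono fun n ⟨hpos, hle⟩ => by
    exact_mod_cast (lt_mul_of_one_lt_left (by positivity) hr).trans_le hle
  obtain ⟨N, hN⟩ := eventually_atTop.mp hgrowth
  obtain ⟨c, hc, hrun⟩ := exists_pos_eventually_zero_run_ge hx hr hN
  exact ⟨liminf_kxSum_pref_pos hc hrun,
    not_eventually_periodic hx (tendsto_atTop_of_eventually_lt_succ hincreasing)⟩
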